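/- Let m ≥ 3, b ∈ {0,1}, P_{m,b} = {(a_1,…,a_m) ∈ {0,1}^m : a_1 ⊕ ⋯ ⊕ a_m = b}, and let π be the uniform distribution on P_{m,b}. If 0 < δ < 1/(2(m+1)) and f_1,…,f_m : {0,1}^n → {0,1} is a (π,δ)-approximate generalized polymorphism of P_{m,b}, then there exist a single set S ⊆ [n] and bits b_1,…,b_m ∈ {0,1} such that Pr_{x ~ uniform({0,1}^n)}[f_j(x) ≠ χ_{S,b_j}(x)] ≤ δ for every j ∈ [m], and the tuple (χ_{S,b_1},…,χ_{S,b_m}) is a generalized polymorphism of P_{m,b}. -/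

import Mathlib

open Finset

attribute [local instance 10] Classical.propDecidable

noncomputable section

/-- The XOR `⊕_{i ∈ S} x_i`. -/
def parity {k : ℕ} (S : Finset (Fin k)) (x : Fin k → Bool) : Bool :=
  decide ((S.filter fun i => x i = true).card % 2 = 1)

/-- The (possibly negated) character `χ_{S,b}(x) = b ⊕ ⊕_{i ∈ S} x_i`. -/
def chi {k : ℕ} (S : Finset (Fin k)) (b : Bool) (x : Fin k → Bool) : Bool :=
  xor b (parity S x)

/-- The parity predicate `P_{m,b} = {a ∈ {0,1}^m : a₁ ⊕ ⋯ ⊕ a_m = b}`. -/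
def parityPred (m : ℕ) (b : Bool) : Finset (Fin m → Bool) :=
  Finset.univ.filter fun a => parity Finset.univ a = b

/-- The uniform distribution on `P_{m,b}`. -/
def unifParity (m : ℕ) (b : Bool) : (Fin m → Bool) → ℝ :=
  fun w => if w ∈ parityPred m b then ((parityPred m b).card : ℝ)⁻¹ else 0

/-- `f₁, …, f_m` is a generalized polymorphism of the predicate `P ⊆ {0,1}^m`. -/
def IsGenPoly {m n : ℕ} (P : Finset (Fin m → Bool)) (f : Fin m → (Fin n → Bool) → Bool) : Prop :=
  ∀ x : Fin n → (Fin m → Bool), (∀ i, x i ∈ P) →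
    (fun j => f j (fun i => x i j)) ∈ P

/-- The probability, when the `n` columns are drawn i.i.d. from `μ`, that
`(f₁(x⁽¹⁾), …, f_m(x⁽ᵐ⁾)) ∈ P`. -/
def polyProb {m n : ℕ} (μ : (Fin m → Bool) → ℝ) (P : Finset (Fin m → Bool))
    (f : Fin m → (Fin n → Bool) → Bool) : ℝ :=
  ∑ x : Fin n → (Fin m → Bool), (∏ i, μ (x i)) *
    (if (fun j => f j (fun i => x i j)) ∈ P then 1 else 0)

/-!
Write bits as signs `±1` and expand every `f_j` in the Walsh basis. The columns are independent,
and under `π` every character `χ_T` with `∅ ≠ T ≠ [m]` has mean zero, so only diagonal terms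
survive: `Pr[f ∈ P] = 1/2 + (±1/2) Σ_S ±∏_j f̂_j(S)`. Hence `Σ_S ∏_j |f̂_j(S)| ≥ 1 - 2δ`. Bound all
factors but three by `1`, one by its maximum, and the other two by Cauchy–Schwarz and Parseval:
each `f_j` has a coefficient `|f̂_j(S_j)| ≥ 1 - 2δ`, so it is `δ`-close to some `χ_{S_j,b_j}`. Every
column marginal of `π` is uniform, so a union bound shows that the characters satisfy `P` with
probability `> 1/2`. By the same expansion that probability is `1/2` unless all `S_j` coincide,
and then it is `0` or `1`. So it is `1`, and the characters form an exact polymorphism.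
-/

namespace LinearityTesting

def boolSign (b : Bool) : ℝ := if b then -1 else 1

@[simp] lemma boolSign_false : boolSign false = 1 := rfl

@[simp] lemma boolSign_true : boolSign true = -1 := rfl

@[simp] lemma boolSign_mul_self (b : Bool) : boolSign b * boolSign b = 1 := by
  cases b <;> simp

@[simp] lemma abs_boolSign (b : Bool) : |boolSign b| = 1 := by cases b <;> simp

lemma boolSign_xor (u v : Bool) : boolSign (xor u v) = boolSign u * boolSign v := by
  cases u <;> cases v <;> simp

section Walsh

variable {ι : Type*}

def walsh (S : Finset ι) (x : ι → Bool) : ℝ := ∏ i ∈ S, boolSign (x i)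

@[simp] lemma walsh_empty (x : ι → Bool) : walsh ∅ x = 1 := Finset.prod_empty

variable [Fintype ι] [DecidableEq ι]

def walshCoeff (G : (ι → Bool) → ℝ) (S : Finset ι) : ℝ :=
  ((2 : ℝ) ^ Fintype.card ι)⁻¹ * ∑ x, G x * walsh S x

def walshMoment (μ : (ι → Bool) → ℝ) (T : Finset ι) : ℝ := ∑ a, μ a * walsh T a

lemma walsh_eq_prod_ite (S : Finset ι) (x : ι → Bool) :
    walsh S x = ∏ i, if i ∈ S then boolSign (x i) else 1 := by
  rw [Finset.prod_ite_mem, Finset.univ_inter, walsh]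

lemma sum_walsh_mul_walsh (S T : Finset ι) :
    ∑ x : ι → Bool, walsh S x * walsh T x = if S = T then 2 ^ Fintype.card ι else 0 := by
  simp only [walsh_eq_prod_ite, ← Finset.prod_mul_distrib]
  rw [← Fintype.prod_sum fun i (a : Bool) =>
    (if i ∈ S then boolSign a else 1) * (if i ∈ T then boolSign a else 1)]
  split_ifs with h
  · subst h
    rw [Finset.prod_congr rfl fun i _ => ?_, Finset.prod_const, Finset.card_univ]
    split_ifs <;> simp
  · obtain ⟨i, hi⟩ : ∃ i, ¬(i ∈ S ↔ i ∈ T) := by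
      by_contra! hc
      exact h (Finset.ext hc)
    refine Finset.prod_eq_zero (Finset.mem_univ i) ?_
    by_cases hS : i ∈ S <;> by_cases hT : i ∈ T <;> simp_all

lemma sum_walsh_mul_walsh_apply (x y : ι → Bool) :
    ∑ S : Finset ι, walsh S x * walsh S y = if x = y then 2 ^ Fintype.card ι else 0 := by
  have h := (Finset.prod_add (fun i => boolSign (x i) * boolSign (y i)) (fun _ => (1 : ℝ))
    Finset.univ).symm
  simp only [Finset.prod_const_one, mul_one, Finset.powerset_univ] at h
  simp only [walsh, ← Finset.prod_mul_distrib]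
  rw [h]
  split_ifs with hxy
  · subst hxy
    simp only [boolSign_mul_self, Finset.prod_const, Finset.card_univ]
    norm_num
  · obtain ⟨i, hi⟩ : ∃ i, x i ≠ y i := by
      by_contra! hc
      exact hxy (funext hc)
    refine Finset.prod_eq_zero (Finset.mem_univ i) ?_
    cases hx : x i <;> cases hy : y i <;> simp_all

lemma sum_walshCoeff_mul_walsh (G : (ι → Bool) → ℝ) (y : ι → Bool) :
    ∑ S, walshCoeff G S * walsh S y = G y := by
  simp only [walshCoeff, mul_assoc, Finset.sum_mul, ← Finset.mul_sum]
  rw [Finset.sum_comm]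
  simp only [← Finset.mul_sum, sum_walsh_mul_walsh_apply, mul_ite, mul_zero,
    Finset.sum_ite_eq', Finset.mem_univ, if_true]
  field_simp

lemma sum_walshCoeff_sq (G : (ι → Bool) → ℝ) :
    ∑ S, walshCoeff G S ^ 2 = ((2 : ℝ) ^ Fintype.card ι)⁻¹ * ∑ x, G x ^ 2 := by
  have h : ∀ S, walshCoeff G S ^ 2
      = ((2 : ℝ) ^ Fintype.card ι)⁻¹ * ∑ x, G x * (walshCoeff G S * walsh S x) := by
    intro S
    rw [sq]
    nth_rewrite 2 [walshCoeff]
    simp only [Finset.mul_sum]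
    exact Finset.sum_congr rfl fun x _ => by ring
  simp only [h, ← Finset.mul_sum]
  rw [Finset.sum_comm]
  simp only [← Finset.mul_sum, sum_walshCoeff_mul_walsh, sq]

lemma sum_walshCoeff_sq_boolSign (g : (ι → Bool) → Bool) :
    ∑ S, walshCoeff (boolSign ∘ g) S ^ 2 = 1 := by
  rw [sum_walshCoeff_sq]
  simp [sq]

lemma ite_ne_eq_one_sub_boolSign_mul (u v : Bool) :
    (if u ≠ v then (1 : ℝ) else 0) = (1 - boolSign u * boolSign v) / 2 := by
  cases u <;> cases v <;> norm_num

lemma sum_ite_ne_eq (g h : (ι → Bool) → Bool) :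
    ∑ y, ((2 : ℝ) ^ Fintype.card ι)⁻¹ * (if g y ≠ h y then 1 else 0)
      = (1 - ((2 : ℝ) ^ Fintype.card ι)⁻¹ * ∑ y, boolSign (g y) * boolSign (h y)) / 2 := by
  simp only [ite_ne_eq_one_sub_boolSign_mul, ← Finset.mul_sum, ← Finset.sum_div,
    Finset.sum_sub_distrib, Finset.sum_const, Finset.card_univ, Fintype.card_fun,
    Fintype.card_bool, nsmul_eq_mul, Nat.cast_pow, Nat.cast_ofNat]
  field_simp

end Walsh

lemma boolSign_decide_mod_two (c : ℕ) : boolSign (decide (c % 2 = 1)) = (-1) ^ c := by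
  rcases Nat.even_or_odd c with h | h
  · simp [h.neg_one_pow, Nat.even_iff.mp h]
  · simp [h.neg_one_pow, Nat.odd_iff.mp h]

lemma walsh_eq_boolSign_parity {k : ℕ} (S : Finset (Fin k)) (x : Fin k → Bool) :
    walsh S x = boolSign (parity S x) := by
  rw [parity, boolSign_decide_mod_two, walsh]
  simp only [boolSign, Finset.prod_ite, Finset.prod_const, one_pow, mul_one]

lemma walshCoeff_chi {k : ℕ} (S T : Finset (Fin k)) (b : Bool) :
    walshCoeff (boolSign ∘ chi S b) T = if T = S then boolSign b else 0 := by
  simp only [walshCoeff, Function.comp, chi, boolSign_xor, ← walsh_eq_boolSign_parity,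
    mul_assoc, ← Finset.mul_sum, sum_walsh_mul_walsh, eq_comm (a := S)]
  split_ifs
  · field_simp
  · simp

lemma sum_ite_ne_chi_eq {k : ℕ} (g : (Fin k → Bool) → Bool) (S : Finset (Fin k)) (b : Bool) :
    ∑ y, ((2 : ℝ) ^ k)⁻¹ * (if g y ≠ chi S b y then 1 else 0)
      = (1 - boolSign b * walshCoeff (boolSign ∘ g) S) / 2 := by
  have h := sum_ite_ne_eq g (chi S b)
  simp only [Fintype.card_fin] at h
  rw [h, walshCoeff, Fintype.card_fin, Finset.mul_sum, Finset.mul_sum, Finset.mul_sum]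
  congr 2
  refine Finset.sum_congr rfl fun y _ => ?_
  simp only [chi, boolSign_xor, walsh_eq_boolSign_parity, Function.comp]
  ring

lemma exists_sum_ite_ne_chi_eq {k : ℕ} (g : (Fin k → Bool) → Bool) (S : Finset (Fin k)) :
    ∃ b, ∑ y, ((2 : ℝ) ^ k)⁻¹ * (if g y ≠ chi S b y then 1 else 0)
      = (1 - |walshCoeff (boolSign ∘ g) S|) / 2 := by
  refine ⟨decide (walshCoeff (boolSign ∘ g) S < 0), ?_⟩
  rw [sum_ite_ne_chi_eq]
  by_cases h : walshCoeff (boolSign ∘ g) S < 0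
  · simp [h, abs_of_neg h]
  · simp [h, abs_of_nonneg (not_lt.mp h)]

section Columns

variable {α β : Type*} [Fintype α] [Fintype β] [DecidableEq β]

def colSet (σ : α → Finset β) (i : β) : Finset α := univ.filter fun j => i ∈ σ j

lemma prod_walsh_eq_prod_walsh_colSet (σ : α → Finset β) (x : β → α → Bool) :
    ∏ j, walsh (σ j) (fun i => x i j) = ∏ i, walsh (colSet σ i) (x i) :=
  Finset.prod_comm' (by simp [colSet])

variable [DecidableEq α]

lemma sum_prod_mul_prod_walsh (μ : (α → Bool) → ℝ) (σ : α → Finset β) :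
    ∑ x : β → α → Bool, (∏ i, μ (x i)) * ∏ j, walsh (σ j) (fun i => x i j)
      = ∏ i, walshMoment μ (colSet σ i) := by
  simp only [prod_walsh_eq_prod_walsh_colSet σ, ← Finset.prod_mul_distrib, walshMoment]
  exact (Fintype.prod_sum fun i a => μ a * walsh (colSet σ i) a).symm

lemma sum_prod_mul_prod_boolSign (μ : (α → Bool) → ℝ) (g : α → (β → Bool) → Bool) :
    ∑ x : β → α → Bool, (∏ i, μ (x i)) * ∏ j, boolSign (g j fun i => x i j)
      = ∑ σ : α → Finset β,
          (∏ j, walshCoeff (boolSign ∘ g j) (σ j)) * ∏ i, walshMoment μ (colSet σ i) := by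
  have expand : ∀ x : β → α → Bool, ∏ j, boolSign (g j fun i => x i j)
      = ∑ σ : α → Finset β,
          ∏ j, walshCoeff (boolSign ∘ g j) (σ j) * walsh (σ j) (fun i => x i j) := by
    intro x
    rw [← Fintype.prod_sum fun j S => walshCoeff (boolSign ∘ g j) S * walsh S (fun i => x i j)]
    simp only [sum_walshCoeff_mul_walsh, Function.comp]
  simp only [expand, Finset.mul_sum, Finset.prod_mul_distrib]
  rw [Finset.sum_comm]
  refine Finset.sum_congr rfl fun σ _ => ?_
  rw [← sum_prod_mul_prod_walsh, Finset.mul_sum]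
  exact Finset.sum_congr rfl fun x _ => by ring

end Columns

section Estimates

variable {ι κ : Type*} [Fintype ι] [DecidableEq ι]

lemma prod_abs_le_of_ne (c : ι → ℝ) (hc : ∀ i, |c i| ≤ 1) {j k l : ι}
    (hjk : j ≠ k) (hjl : j ≠ l) (hkl : k ≠ l) :
    ∏ i, |c i| ≤ |c j| * (|c k| * |c l|) := by
  calc ∏ i, |c i| ≤ ∏ i ∈ {j, k, l}, |c i| :=
        Finset.prod_le_prod_of_subset_of_le_one (Finset.subset_univ _)
          (fun i _ => abs_nonneg _) (fun i _ _ => hc i)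
    _ = |c j| * (|c k| * |c l|) := by
        rw [Finset.prod_insert (by simp [hjk, hjl]), Finset.prod_insert (by simp [hkl]),
          Finset.prod_singleton]

lemma sum_abs_mul_abs_le_one [Fintype κ] (a b : κ → ℝ) (ha : ∑ S, a S ^ 2 ≤ 1)
    (hb : ∑ S, b S ^ 2 ≤ 1) :
    ∑ S, |a S| * |b S| ≤ 1 := by
  have hcs := Finset.sum_mul_sq_le_sq_mul_sq univ (fun S => |a S|) (fun S => |b S|)
  simp only [sq_abs] at hcs
  have hnn : 0 ≤ ∑ S, |a S| * |b S| := by positivity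
  exact (sq_le_one_iff₀ hnn).mp (hcs.trans (mul_le_one₀ ha (by positivity) hb))

lemma exists_sum_prod_abs_le [Fintype κ] [Nonempty κ] (c : ι → κ → ℝ)
    (hι : 3 ≤ Fintype.card ι) (hsq : ∀ i, ∑ S, c i S ^ 2 ≤ 1) (j : ι) :
    ∃ S, ∑ T, ∏ i, |c i T| ≤ |c j S| := by
  obtain ⟨S, -, hS⟩ := Finset.exists_max_image univ (fun S => |c j S|) univ_nonempty
  obtain ⟨k, hk, l, hl, hkl⟩ : ∃ k ∈ univ.erase j, ∃ l ∈ univ.erase j, k ≠ l := by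
    rw [← Finset.one_lt_card, Finset.card_erase_of_mem (Finset.mem_univ j), Finset.card_univ]
    omega
  have hle : ∀ T i, |c i T| ≤ 1 := fun T i =>
    (sq_le_one_iff_abs_le_one _).mp <| (Finset.single_le_sum (f := fun T => c i T ^ 2)
      (fun _ _ => sq_nonneg _) (Finset.mem_univ T)).trans (hsq i)
  refine ⟨S, ?_⟩
  calc ∑ T, ∏ i, |c i T|
      ≤ ∑ T, |c j S| * (|c k T| * |c l T|) := Finset.sum_le_sum fun T _ =>
        (prod_abs_le_of_ne (c · T) (hle T) (Finset.ne_of_mem_erase hk).symm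
          (Finset.ne_of_mem_erase hl).symm hkl).trans
          (mul_le_mul_of_nonneg_right (hS T (Finset.mem_univ T)) (by positivity))
    _ = |c j S| * ∑ T, |c k T| * |c l T| := by rw [Finset.mul_sum]
    _ ≤ |c j S| := mul_le_of_le_one_right (abs_nonneg _)
        (sum_abs_mul_abs_le_one _ _ (hsq k) (hsq l))

end Estimates

variable {m n : ℕ} {β : Type*} [Fintype β] [DecidableEq β]

section Polymorphisms

variable (μ : (Fin m → Bool) → ℝ) (P : Finset (Fin m → Bool))

lemma ite_mem_le_ite_mem_add (t u : Fin m → Bool) :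
    (if t ∈ P then (1 : ℝ) else 0)
      ≤ (if u ∈ P then 1 else 0) + ∑ j, if t j ≠ u j then 1 else 0 := by
  by_cases htu : t = u
  · subst htu
    simp
  · obtain ⟨j, hj⟩ := Function.ne_iff.mp htu
    have h1 : (1 : ℝ) ≤ ∑ j, if t j ≠ u j then 1 else 0 := by
      simpa [hj] using Finset.single_le_sum (f := fun j => if t j ≠ u j then (1 : ℝ) else 0)
        (fun _ _ => by positivity) (Finset.mem_univ j)
    have h2 : (if t ∈ P then (1 : ℝ) else 0) ≤ 1 := by split_ifs <;> norm_num
    have h3 : (0 : ℝ) ≤ if u ∈ P then 1 else 0 := by positivity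
    linarith

lemma polyProb_le_add (hμ : ∀ a, 0 ≤ μ a) (f g : Fin m → (Fin n → Bool) → Bool) :
    polyProb μ P f ≤ polyProb μ P g + ∑ j, ∑ x : Fin n → Fin m → Bool,
      (∏ i, μ (x i)) * (if f j (fun i => x i j) ≠ g j (fun i => x i j) then 1 else 0) := by
  rw [Finset.sum_comm, polyProb, polyProb, ← Finset.sum_add_distrib]
  refine Finset.sum_le_sum fun x _ => ?_
  rw [← Finset.mul_sum, ← mul_add]
  exact mul_le_mul_of_nonneg_left (ite_mem_le_ite_mem_add P _ _)
    (Finset.prod_nonneg fun i _ => hμ _)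

lemma isGenPoly_of_sum_prod_le_polyProb (hμ : ∀ a, 0 ≤ μ a) (hμP : ∀ a ∈ P, 0 < μ a)
    (g : Fin m → (Fin n → Bool) → Bool)
    (h : ∑ x : Fin n → Fin m → Bool, ∏ i, μ (x i) ≤ polyProb μ P g) :
    IsGenPoly P g := by
  intro x hx
  by_contra hg
  have hterm : ∀ z : Fin n → Fin m → Bool, 0 ≤ (∏ i, μ (z i)) *
      (1 - if (fun j => g j fun i => z i j) ∈ P then 1 else 0) := fun z =>
    mul_nonneg (Finset.prod_nonneg fun i _ => hμ _) (by split_ifs <;> norm_num)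
  have hpos :
      0 < (∏ i, μ (x i)) * (1 - if (fun j => g j fun i => x i j) ∈ P then 1 else 0) := by
    rw [if_neg hg, sub_zero, mul_one]
    exact Finset.prod_pos fun i _ => hμP _ (hx i)
  have hsum := Finset.single_le_sum (fun z _ => hterm z) (Finset.mem_univ x)
  simp only [mul_one_sub, Finset.sum_sub_distrib] at hsum
  rw [polyProb] at h
  linarith

end Polymorphisms

lemma ite_mem_parityPred (b : Bool) (a : Fin m → Bool) :
    (if a ∈ parityPred m b then (1 : ℝ) else 0) = (1 + boolSign b * walsh univ a) / 2 := by
  rw [walsh_eq_boolSign_parity]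
  simp only [parityPred, Finset.mem_filter, Finset.mem_univ, true_and]
  cases b <;> cases parity univ a <;> norm_num

lemma sum_ite_mem_parityPred_mul_walsh (hm : 0 < m) (b : Bool) (T : Finset (Fin m)) :
    ∑ a, (if a ∈ parityPred m b then (1 : ℝ) else 0) * walsh T a
      = 2 ^ m / 2 * if T = ∅ then 1 else if T = univ then boolSign b else 0 := by
  have huniv : (univ : Finset (Fin m)) ≠ ∅ := (univ_nonempty_iff.mpr ⟨⟨0, hm⟩⟩).ne_empty
  have h : ∀ a, (if a ∈ parityPred m b then (1 : ℝ) else 0) * walsh T a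
      = (walsh ∅ a * walsh T a + boolSign b * (walsh univ a * walsh T a)) / 2 := by
    intro a
    rw [ite_mem_parityPred, walsh_empty]
    ring
  rw [Finset.sum_congr rfl fun a _ => h a, ← Finset.sum_div, Finset.sum_add_distrib,
    ← Finset.mul_sum, sum_walsh_mul_walsh, sum_walsh_mul_walsh, Fintype.card_fin]
  by_cases h0 : T = ∅
  · rw [h0, if_pos rfl, if_pos rfl, if_neg huniv]
    ring
  · rw [if_neg (Ne.symm h0), if_neg h0]
    by_cases h1 : T = univ
    · rw [h1, if_pos rfl, if_pos rfl]
      ring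
    · rw [if_neg (Ne.symm h1), if_neg h1]
      ring

lemma card_parityPred (hm : 0 < m) (b : Bool) :
    ((parityPred m b).card : ℝ) = 2 ^ m / 2 := by
  simpa [Finset.sum_boole] using sum_ite_mem_parityPred_mul_walsh hm b ∅

lemma walshMoment_unifParity (hm : 0 < m) (b : Bool) (T : Finset (Fin m)) :
    walshMoment (unifParity m b) T = if T = ∅ then 1 else if T = univ then boolSign b else 0 := by
  have h : ∀ a, unifParity m b a * walsh T a
      = (2 ^ m / 2 : ℝ)⁻¹ * ((if a ∈ parityPred m b then 1 else 0) * walsh T a) := by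
    intro a
    simp only [unifParity, card_parityPred hm]
    split_ifs <;> ring
  rw [walshMoment, Finset.sum_congr rfl fun a _ => h a, ← Finset.mul_sum,
    sum_ite_mem_parityPred_mul_walsh hm, inv_mul_cancel_left₀ (by positivity)]

lemma unifParity_nonneg (b : Bool) (a : Fin m → Bool) : 0 ≤ unifParity m b a := by
  unfold unifParity
  split_ifs <;> positivity

lemma unifParity_pos (hm : 0 < m) (b : Bool) {a : Fin m → Bool} (ha : a ∈ parityPred m b) :
    0 < unifParity m b a := by
  rw [unifParity, if_pos ha, card_parityPred hm]
  positivity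

lemma prod_walshMoment_unifParity_colSet_of_ne (hm : 0 < m) (b : Bool) (σ : Fin m → Finset β)
    {j k : Fin m} (hjk : σ j ≠ σ k) :
    ∏ i, walshMoment (unifParity m b) (colSet σ i) = 0 := by
  obtain ⟨i, hi⟩ : ∃ i, ¬(i ∈ σ j ↔ i ∈ σ k) := by
    by_contra! h
    exact hjk (Finset.ext h)
  have hmem : ∀ l, l ∈ colSet σ i ↔ i ∈ σ l := by simp [colSet]
  have hne : colSet σ i ≠ ∅ := fun h => hi (by simp [← hmem, h])
  have hnu : colSet σ i ≠ univ := fun h => hi (by simp [← hmem, h])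
  refine Finset.prod_eq_zero (Finset.mem_univ i) ?_
  rw [walshMoment_unifParity hm, if_neg hne, if_neg hnu]

lemma prod_walshMoment_unifParity_colSet_const (hm : 0 < m) (b : Bool) (S : Finset β) :
    ∏ i, walshMoment (unifParity m b) (colSet (fun _ => S) i) = boolSign b ^ S.card := by
  have h : ∀ i, walshMoment (unifParity m b) (colSet (fun _ => S) i)
      = if i ∈ S then boolSign b else 1 := by
    have huniv : (univ : Finset (Fin m)) ≠ ∅ :=
      (univ_nonempty_iff.mpr ⟨⟨0, hm⟩⟩).ne_empty
    intro i
    by_cases hi : i ∈ S <;> simp [colSet, hi, walshMoment_unifParity hm, huniv]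
  rw [Finset.prod_congr rfl fun i _ => h i, Finset.prod_ite_mem, Finset.univ_inter,
    Finset.prod_const]

lemma prod_walshMoment_unifParity_colSet_update (hm : 2 ≤ m) (b : Bool) (j : Fin m)
    (S : Finset β) :
    ∏ i, walshMoment (unifParity m b)
        (colSet (Function.update (fun _ : Fin m => (∅ : Finset β)) j S) i)
      = if S = ∅ then 1 else 0 := by
  split_ifs with hS
  · simpa [hS] using prod_walshMoment_unifParity_colSet_const (by omega) b (∅ : Finset β)
  · obtain ⟨i, hi⟩ := Finset.nonempty_iff_ne_empty.mpr hS
    have hcol : colSet (Function.update (fun _ : Fin m => (∅ : Finset β)) j S) i = {j} := by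
      ext l
      by_cases hl : l = j <;> simp [colSet, Function.update_apply, hl, hi]
    have hne : ({j} : Finset (Fin m)) ≠ univ := by
      intro h
      have := congrArg Finset.card h
      simp at this
      omega
    refine Finset.prod_eq_zero (Finset.mem_univ i) ?_
    rw [hcol, walshMoment_unifParity (by omega), if_neg (Finset.singleton_ne_empty j), if_neg hne]

lemma sum_prod_unifParity (hm : 0 < m) (b : Bool) :
    ∑ x : Fin n → Fin m → Bool, ∏ i, unifParity m b (x i) = 1 := by
  have h := sum_prod_mul_prod_walsh (unifParity m b) fun _ : Fin m => (∅ : Finset (Fin n))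
  rw [prod_walshMoment_unifParity_colSet_const hm] at h
  simpa using h

lemma sum_prod_unifParity_mul_prod_boolSign (hm : 0 < m) (b : Bool)
    (g : Fin m → (Fin n → Bool) → Bool) :
    ∑ x : Fin n → Fin m → Bool,
        (∏ i, unifParity m b (x i)) * ∏ j, boolSign (g j fun i => x i j)
      = ∑ S : Finset (Fin n), boolSign b ^ S.card * ∏ j, walshCoeff (boolSign ∘ g j) S := by
  rw [sum_prod_mul_prod_boolSign]
  refine (Fintype.sum_of_injective (fun S _ => S) (fun S T h => congrFun h ⟨0, hm⟩) _ _
    (fun σ hσ => ?_) (fun S => ?_)).symm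
  · obtain ⟨j, hj⟩ : ∃ j, σ j ≠ σ ⟨0, hm⟩ := by
      by_contra! h
      exact hσ ⟨σ ⟨0, hm⟩, funext fun j => (h j).symm⟩
    rw [prod_walshMoment_unifParity_colSet_of_ne hm b σ hj, mul_zero]
  · rw [prod_walshMoment_unifParity_colSet_const hm, mul_comm]

lemma polyProb_unifParity (hm : 0 < m) (b : Bool) (g : Fin m → (Fin n → Bool) → Bool) :
    polyProb (unifParity m b) (parityPred m b) g
      = 1 / 2 + boolSign b / 2 *
          ∑ S : Finset (Fin n), boolSign b ^ S.card * ∏ j, walshCoeff (boolSign ∘ g j) S := by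
  have h : ∀ x : Fin n → Fin m → Bool,
      (∏ i, unifParity m b (x i)) *
          (if (fun j => g j fun i => x i j) ∈ parityPred m b then 1 else 0)
        = (∏ i, unifParity m b (x i)) / 2 + boolSign b / 2 *
            ((∏ i, unifParity m b (x i)) * ∏ j, boolSign (g j fun i => x i j)) := by
    intro x
    rw [ite_mem_parityPred, walsh]
    ring
  rw [polyProb, Finset.sum_congr rfl fun x _ => h x, Finset.sum_add_distrib, ← Finset.sum_div,
    ← Finset.mul_sum, sum_prod_unifParity hm, sum_prod_unifParity_mul_prod_boolSign hm]

lemma sum_prod_unifParity_mul_apply (hm : 2 ≤ m) (b : Bool) (j : Fin m)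
    (G : (Fin n → Bool) → ℝ) :
    ∑ x : Fin n → Fin m → Bool, (∏ i, unifParity m b (x i)) * G (fun i => x i j)
      = ((2 : ℝ) ^ n)⁻¹ * ∑ y, G y := by
  have h : ∀ x : Fin n → Fin m → Bool, (∏ i, unifParity m b (x i)) * G (fun i => x i j)
      = ∑ S : Finset (Fin n), walshCoeff G S * ((∏ i, unifParity m b (x i)) *
          ∏ k, walsh (Function.update (fun _ : Fin m => (∅ : Finset (Fin n))) j S k)
            (fun i => x i k)) := by
    intro x
    rw [← sum_walshCoeff_mul_walsh G, Finset.mul_sum]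
    refine Finset.sum_congr rfl fun S _ => ?_
    rw [Fintype.prod_eq_single j fun k hk => by simp [Function.update_of_ne hk],
      Function.update_self]
    ring
  rw [Finset.sum_congr rfl fun x _ => h x, Finset.sum_comm]
  simp only [← Finset.mul_sum, sum_prod_mul_prod_walsh,
    prod_walshMoment_unifParity_colSet_update hm, mul_ite, mul_one, mul_zero,
    Finset.sum_ite_eq', Finset.mem_univ, if_true, walshCoeff, walsh_empty, Fintype.card_fin]

lemma polyProb_unifParity_le_add (hm : 2 ≤ m) (b : Bool)
    (f g : Fin m → (Fin n → Bool) → Bool) :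
    polyProb (unifParity m b) (parityPred m b) f ≤ polyProb (unifParity m b) (parityPred m b) g
      + ∑ j, ∑ y, ((2 : ℝ) ^ n)⁻¹ * (if f j y ≠ g j y then 1 else 0) := by
  refine (polyProb_le_add _ _ (unifParity_nonneg b) f g).trans_eq ?_
  congr 1
  refine Finset.sum_congr rfl fun j _ => ?_
  rw [sum_prod_unifParity_mul_apply hm b j fun y => if f j y ≠ g j y then 1 else 0,
    Finset.mul_sum]

lemma two_mul_polyProb_unifParity_sub_one_le (hm : 0 < m) (b : Bool)
    (f : Fin m → (Fin n → Bool) → Bool) :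
    2 * polyProb (unifParity m b) (parityPred m b) f - 1
      ≤ ∑ S : Finset (Fin n), ∏ j, |walshCoeff (boolSign ∘ f j) S| := by
  rw [polyProb_unifParity hm]
  set E := ∑ S : Finset (Fin n), boolSign b ^ S.card * ∏ j, walshCoeff (boolSign ∘ f j) S
  have hE :
      |boolSign b * E| ≤ ∑ S : Finset (Fin n), ∏ j, |walshCoeff (boolSign ∘ f j) S| := by
    rw [abs_mul, abs_boolSign, one_mul]
    refine (Finset.abs_sum_le_sum_abs _ _).trans_eq (Finset.sum_congr rfl fun S _ => ?_)
    rw [abs_mul, abs_pow, abs_boolSign, one_pow, one_mul, Finset.abs_prod]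
  linarith [le_abs_self (boolSign b * E)]

lemma forall_eq_and_polyProb_chi_eq_one_of_half_lt (hm : 0 < m) (b : Bool)
    (S : Fin m → Finset (Fin n)) (bs : Fin m → Bool)
    (h : 1 / 2 < polyProb (unifParity m b) (parityPred m b) fun j => chi (S j) (bs j)) :
    (∀ j, S j = S ⟨0, hm⟩) ∧
      polyProb (unifParity m b) (parityPred m b) (fun j => chi (S j) (bs j)) = 1 := by
  simp only [polyProb_unifParity hm, walshCoeff_chi, Finset.prod_ite_zero, Finset.mem_univ,
    true_implies] at h ⊢
  by_cases hS : ∀ j, S j = S ⟨0, hm⟩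
  · refine ⟨hS, ?_⟩
    rw [Finset.sum_eq_single (S ⟨0, hm⟩)
      (fun T _ hT => by rw [if_neg fun h => hT (h _), mul_zero]) (by simp),
      if_pos fun j => (hS j).symm] at h ⊢
    set E := boolSign b * (boolSign b ^ (S ⟨0, hm⟩).card * ∏ j, boolSign (bs j))
    have hE : |E| = 1 := by simp [E, abs_mul, Finset.abs_prod]
    have hEpos : 0 < E := by simp only [E]; linarith
    rw [abs_of_pos hEpos] at hE
    simp only [E] at hE
    linarith
  · rw [Finset.sum_eq_zero fun T _ => by
      rw [if_neg fun h => hS fun j => (h j).symm.trans (h ⟨0, hm⟩), mul_zero]] at h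
    linarith

end LinearityTesting

open LinearityTesting

theorem linearity_testing_uniform_general
    (m : ℕ) (hm : 3 ≤ m) (b : Bool)
    (δ : ℝ) (hδ : δ < 1 / (2 * (m + 1)))
    (n : ℕ) (f : Fin m → (Fin n → Bool) → Bool)
    (happ : 1 - δ ≤ polyProb (unifParity m b) (parityPred m b) f) :
    ∃ (S : Finset (Fin n)) (bs : Fin m → Bool),
      (∀ j, ∑ x : Fin n → Bool, ((2 : ℝ) ^ n)⁻¹ *
        (if f j x ≠ chi S (bs j) x then 1 else 0) ≤ δ) ∧
      IsGenPoly (parityPred m b) (fun j => chi S (bs j)) := by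
  have hm0 : 0 < m := by omega
  have hlarge : ∀ j, ∃ S, 1 - 2 * δ ≤ |walshCoeff (boolSign ∘ f j) S| := fun j =>
    (exists_sum_prod_abs_le (fun j => walshCoeff (boolSign ∘ f j)) (by simpa)
      (fun i => (sum_walshCoeff_sq_boolSign (f i)).le) j).imp fun S hS => by
        linarith [two_mul_polyProb_unifParity_sub_one_le hm0 b f]
  choose S hS using hlarge
  choose bs hbs using fun j => exists_sum_ite_ne_chi_eq (f j) (S j)
  have hclose :
      ∀ j, ∑ y, ((2 : ℝ) ^ n)⁻¹ * (if f j y ≠ chi (S j) (bs j) y then 1 else 0) ≤ δ :=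
    fun j => by linarith [hbs j, hS j]
  have hhalf : 1 / 2 < polyProb (unifParity m b) (parityPred m b) fun j => chi (S j) (bs j) := by
    have hunion := polyProb_unifParity_le_add (by omega) b f fun j => chi (S j) (bs j)
    have hsum := Finset.sum_le_sum fun j (_ : j ∈ univ) => hclose j
    have hδm : (m + 1) * δ < 1 / 2 := by
      rw [lt_div_iff₀ (by positivity)] at hδ
      linarith
    simp only [Finset.sum_const, Finset.card_univ, Fintype.card_fin, nsmul_eq_mul] at hsum
    linarith
  obtain ⟨hconst, hone⟩ := forall_eq_and_polyProb_chi_eq_one_of_half_lt hm0 b S bs hhalf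
  refine ⟨S ⟨0, hm0⟩, bs, fun j => hconst j ▸ hclose j, ?_⟩
  have hpoly := isGenPoly_of_sum_prod_le_polyProb _ _ (unifParity_nonneg b)
    (fun _ => unifParity_pos hm0 b) _ (by rw [hone, sum_prod_unifParity hm0])
  simpa only [hconst] using hpoly

/-- **Linearity testing for the uniform distribution.** -/
theorem linearity_testing_uniform
    (m : ℕ) (hm : 3 ≤ m) (b : Bool)
    (δ : ℝ) (hδ0 : 0 < δ) (hδ : δ < 1 / (2 * (m + 1)))
    (n : ℕ) (f : Fin m → (Fin n → Bool) → Bool)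
    (happ : 1 - δ ≤ polyProb (unifParity m b) (parityPred m b) f) :
    ∃ (S : Finset (Fin n)) (bs : Fin m → Bool),
      (∀ j, ∑ x : Fin n → Bool, ((2 : ℝ) ^ n)⁻¹ *
        (if f j x ≠ chi S (bs j) x then 1 else 0) ≤ δ) ∧
      IsGenPoly (parityPred m b) (fun j => chi S (bs j)) :=
  linearity_testing_uniform_general m hm b δ hδ n f happ
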